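/- Let μ be a nonzero r̄-eigenmeasure of r̃+J̃, where r̄ = max_{x∈S} r(x), and let μ = μ^s + h·Leb be its Lebesgue decomposition with h ∈ L¹(S) and μ^s singular with respect to Lebesgue measure. Then μ^s(S ∖ Σ) = 0, where Σ = {x ∈ S : r(x) = r̄}; that is, either μ^s = 0 or μ^s is concentrated on Σ. -/

import Mathlib

open MeasureTheory Filter Topology

/-- A finite positive Borel measure μ on S is a λ-eigenmeasure of the operator r̃+J̃ if for
every Borel set A ⊆ S one has ∫_A r dμ + ∫_A (∫_S K(y,x) μ(dy)) dx = λ μ(A). -/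
def IsEigenmeasure {d : ℕ} (S : Set (EuclideanSpace ℝ (Fin d)))
    (r : EuclideanSpace ℝ (Fin d) → ℝ)
    (K : EuclideanSpace ℝ (Fin d) → EuclideanSpace ℝ (Fin d) → ℝ)
    (lam : ℝ) (μ : MeasureTheory.Measure (EuclideanSpace ℝ (Fin d))) : Prop :=
  ∀ A : Set (EuclideanSpace ℝ (Fin d)), MeasurableSet A → A ⊆ S →
    (∫ x in A, r x ∂μ) + (∫ x in A, (∫ y in S, K y x ∂μ)) = lam * (μ A).toReal

/-! On a Lebesgue-null set `A ⊆ S` the nonlocal term `∫_A (∫_S K(y,x) μ(dy)) dx` vanishes, so the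
eigen-equation degenerates to `∫_A r dμ = r̄ μ(A)`. Since `r < r̄` off `Σ`, this forces `μ(A) = 0`
for every Lebesgue-null `A ⊆ S ∖ Σ`, i.e. `μ` restricted to `S ∖ Σ` is absolutely continuous, and
its singular part vanishes there. -/

namespace MeasureTheory

variable {α : Type*} [MeasurableSpace α]

theorem Measure.singularPart_apply_eq_zero_of_restrict_ac {μ ν : Measure α}
    [μ.HaveLebesgueDecomposition ν] {s : Set α} (hs : MeasurableSet s) (h : μ.restrict s ≪ ν) :
    μ.singularPart ν s = 0 := by
  rw [← Measure.restrict_apply_univ, ← Measure.singularPart_restrict μ ν hs,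
    Measure.singularPart_eq_zero_of_ac h, Measure.coe_zero, Pi.zero_apply]

theorem measure_eq_zero_of_setIntegral_eq_of_lt {μ : Measure α} [IsFiniteMeasure μ]
    {f : α → ℝ} {A : Set α} {c : ℝ} (hA : MeasurableSet A) (hf : IntegrableOn f A μ)
    (hlt : ∀ x ∈ A, f x < c) (hint : ∫ x in A, f x ∂μ = c * (μ A).toReal) : μ A = 0 := by
  have hgap_int : ∫ x in A, (c - f x) ∂μ = 0 := by
    rw [integral_sub (integrable_const c) hf, setIntegral_const, hint, smul_eq_mul, mul_comm,
      Measure.real, sub_self]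
  have hgap_ae : (fun x => c - f x) =ᵐ[μ.restrict A] 0 := by
    refine (integral_eq_zero_iff_of_nonneg_ae ?_ ((integrable_const c).sub hf)).mp hgap_int
    filter_upwards [ae_restrict_mem hA] with x hx
    exact sub_nonneg.mpr (hlt x hx).le
  have hA_null : μ.restrict A A = 0 :=
    measure_mono_null (fun x hx => sub_ne_zero.mpr (hlt x hx).ne') (ae_iff.mp hgap_ae)
  rwa [Measure.restrict_apply_self] at hA_null

end MeasureTheory

theorem IsEigenmeasure.setIntegral_eq_of_volume_eq_zero {d : ℕ}
    {S : Set (EuclideanSpace ℝ (Fin d))} {r : EuclideanSpace ℝ (Fin d) → ℝ}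
    {K : EuclideanSpace ℝ (Fin d) → EuclideanSpace ℝ (Fin d) → ℝ} {lam : ℝ}
    {μ : Measure (EuclideanSpace ℝ (Fin d))} (hμ : IsEigenmeasure S r K lam μ)
    {A : Set (EuclideanSpace ℝ (Fin d))} (hA : MeasurableSet A) (hAS : A ⊆ S)
    (hAvol : volume A = 0) : ∫ x in A, r x ∂μ = lam * (μ A).toReal := by
  simpa [Measure.restrict_eq_zero.mpr hAvol] using hμ A hA hAS

theorem stmt9_general {d : ℕ}
    (S : Set (EuclideanSpace ℝ (Fin d)))
    (hScomp : IsCompact S)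
    (r : EuclideanSpace ℝ (Fin d) → ℝ) (hr : ContinuousOn r S)
    (K : EuclideanSpace ℝ (Fin d) → EuclideanSpace ℝ (Fin d) → ℝ)
    (μ : Measure (EuclideanSpace ℝ (Fin d))) [IsFiniteMeasure μ]
    (rbar : ℝ) (hrbar : IsGreatest (r '' S) rbar)
    (hμ : IsEigenmeasure S r K rbar μ) :
    μ.singularPart volume (S \ {x ∈ S | r x = rbar}) = 0 := by
  set B := S \ {x ∈ S | r x = rbar}
  have hBS : B ⊆ S := Set.sdiff_subset
  have hB : MeasurableSet B := hScomp.isClosed.measurableSet.diff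
    (hr.preimage_isClosed_of_isClosed hScomp.isClosed isClosed_singleton).measurableSet
  have hr_lt : ∀ x ∈ B, r x < rbar := fun x hx =>
    (hrbar.2 ⟨x, hx.1, rfl⟩).lt_of_ne fun h => hx.2 ⟨hx.1, h⟩
  refine Measure.singularPart_apply_eq_zero_of_restrict_ac hB <|
    Measure.AbsolutelyContinuous.mk fun A hA hAvol => ?_
  rw [Measure.restrict_apply hA]
  have hABS : A ∩ B ⊆ S := Set.inter_subset_right.trans hBS
  exact measure_eq_zero_of_setIntegral_eq_of_lt (hA.inter hB)
    ((hr.integrableOn_compact hScomp).mono_set hABS) (fun x hx => hr_lt x hx.2)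
    (hμ.setIntegral_eq_of_volume_eq_zero (hA.inter hB) hABS
      (measure_mono_null Set.inter_subset_left hAvol))

/-- If μ is a nonzero r̄-eigenmeasure of r̃+J̃ (r̄ = max_S r), then the singular part of μ in
its Lebesgue decomposition μ = μˢ + h·Leb is concentrated on Σ = {x ∈ S : r(x) = r̄}:
μˢ(S ∖ Σ) = 0. -/
theorem stmt9 {d : ℕ}
    (Ω S : Set (EuclideanSpace ℝ (Fin d)))
    (hΩne : Ω.Nonempty) (hΩopen : IsOpen Ω) (hΩbdd : Bornology.IsBounded Ω)
    (hΩconn : IsConnected Ω) (hSdef : S = closure Ω)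
    (hScomp : IsCompact S) (hSvol : 0 < volume S)
    (r : EuclideanSpace ℝ (Fin d) → ℝ) (hr : ContinuousOn r S)
    (hrpos : ∀ x ∈ S, 0 < r x)
    (K : EuclideanSpace ℝ (Fin d) → EuclideanSpace ℝ (Fin d) → ℝ)
    (hK : ContinuousOn (fun q : EuclideanSpace ℝ (Fin d) × EuclideanSpace ℝ (Fin d) =>
      K q.1 q.2) (S ×ˢ S))
    (hKnn : ∀ x ∈ S, ∀ y ∈ S, 0 ≤ K x y)
    (ε₀ c₀ : ℝ) (hε₀ : 0 < ε₀) (hc₀ : 0 < c₀)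
    (hKlb : ∀ x ∈ S, ∀ y ∈ S, dist y x < ε₀ → c₀ < K x y)
    (μ : Measure (EuclideanSpace ℝ (Fin d))) [IsFiniteMeasure μ]
    (hμne : μ ≠ 0) (hμS : μ Sᶜ = 0)
    (rbar : ℝ) (hrbar : IsGreatest (r '' S) rbar)
    (hμ : IsEigenmeasure S r K rbar μ) :
    μ.singularPart volume (S \ {x ∈ S | r x = rbar}) = 0 :=
  stmt9_general S hScomp r hr K μ rbar hrbar hμ
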